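/- arXiv:1708.07419 — 7 statements merged into one kernel-verified Lean document; each statement's English description precedes it below -/
import Mathlib

section
/- Let L be a Lie algebra over a commutative ring K, and let a, b ∈ L. For every r ∈ L and every natural numbers m, n there exists s ∈ L such that ⁅(ad a)^m r, (ad a)^{2n} b⁆ = ⁅(ad a)^{m+2n} r, b⁆ + ⁅s, a⁆. -/
/-!
Modulo the image of `x ↦ ⁅x, a⁆`, the Leibniz rule `⁅⁅x, y⁆, a⁆ = ⁅⁅x, a⁆, y⁆ + ⁅x, ⁅y, a⁆⁆` lets
one move a factor `ad a` from the right entry of a bracket to the left one at the cost of a sign.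
Moving all `2n` factors gives the sign `(-1) ^ (2n) = 1`.
-/

namespace LieRing

variable {L : Type*} [LieRing L]

def adRight (a : L) : L →+ L :=
  AddMonoidHom.mk' (fun x => ⁅x, a⁆) fun x y => add_lie x y a

theorem lie_mem_range_adRight (s a : L) : ⁅s, a⁆ ∈ (adRight a).range :=
  ⟨s, rfl⟩

theorem lie_lie_right_add_lie_lie_left_mem_range_adRight (a x y : L) :
    ⁅x, ⁅y, a⁆⁆ + ⁅⁅x, a⁆, y⁆ ∈ (adRight a).range := by
  have leibniz : ⁅x, ⁅y, a⁆⁆ + ⁅⁅x, a⁆, y⁆ = ⁅⁅x, y⁆, a⁆ := by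
    rw [leibniz_lie, ← lie_skew ⁅x, a⁆ y]
    abel
  rw [leibniz]
  exact lie_mem_range_adRight _ a

theorem lie_iterate_right_sub_lie_iterate_left_mem_range_adRight (a : L) (k : ℕ) (x y : L) :
    ⁅x, (fun z : L => ⁅z, a⁆)^[k] y⁆ - (-1 : ℤ) ^ k • ⁅(fun z : L => ⁅z, a⁆)^[k] x, y⁆ ∈
      (adRight a).range := by
  induction k generalizing y with
  | zero => simp
  | succ k ih =>
    set f : L → L := fun z => ⁅z, a⁆
    have step := lie_lie_right_add_lie_lie_left_mem_range_adRight a (f^[k] x) y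
    have split : ⁅x, f^[k + 1] y⁆ - (-1 : ℤ) ^ (k + 1) • ⁅f^[k + 1] x, y⁆ =
        (⁅x, f^[k] (f y)⁆ - (-1 : ℤ) ^ k • ⁅f^[k] x, f y⁆) +
          (-1 : ℤ) ^ k • (⁅f^[k] x, f y⁆ + ⁅f (f^[k] x), y⁆) := by
      rw [Function.iterate_succ_apply, Function.iterate_succ_apply', pow_succ, smul_add,
        mul_neg_one, neg_smul]
      abel
    rw [split]
    exact add_mem (ih (f y)) (zsmul_mem step _)

end LieRing

theorem even_ad_rewrite_general {L : Type*} [LieRing L]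
    (a b : L) (r : L) (m n : ℕ) :
    ∃ s : L,
      ⁅(fun x : L => ⁅x, a⁆)^[m] r, (fun x : L => ⁅x, a⁆)^[2 * n] b⁆ =
        ⁅(fun x : L => ⁅x, a⁆)^[m + 2 * n] r, b⁆ + ⁅s, a⁆ := by
  set f : L → L := fun x => ⁅x, a⁆
  obtain ⟨s, hs⟩ :=
    LieRing.lie_iterate_right_sub_lie_iterate_left_mem_range_adRight a (2 * n) (f^[m] r) b
  refine ⟨s, ?_⟩
  rw [(even_two_mul n).neg_one_pow, one_smul, ← Function.iterate_add_apply, add_comm (2 * n)]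
    at hs
  rw [← sub_eq_iff_eq_add', ← hs]
  rfl

theorem even_ad_rewrite {K L : Type*} [CommRing K] [LieRing L] [LieAlgebra K L]
    (a b : L) (r : L) (m n : ℕ) :
    ∃ s : L,
      ⁅(fun x : L => ⁅x, a⁆)^[m] r, (fun x : L => ⁅x, a⁆)^[2 * n] b⁆ =
        ⁅(fun x : L => ⁅x, a⁆)^[m + 2 * n] r, b⁆ + ⁅s, a⁆ :=
  even_ad_rewrite_general a b r m n
end

section
/- Let L be a Lie algebra over a commutative ring K, and let a, b ∈ L. For every r ∈ L and every natural numbers m, n there exists t ∈ L such that ⁅(ad a)^m r, (ad a)^{2n+1} b⁆ = -⁅(ad a)^{m+2n+1} r, b⁆ + ⁅t, a⁆. -/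
/-! Since `x ↦ ⁅x, a⁆` is a derivation, `⁅x, ⁅y, a⁆⁆ ≡ -⁅⁅x, a⁆, y⁆` modulo its image: one factor of
`ad a` moves across the bracket at the cost of a sign. Moving all `2n + 1` factors gives the sign `-1`. -/

section

variable {L : Type*} [LieRing L]

theorem lie_lie_right_eq_neg_lie_lie_add_lie (a x y : L) :
    ⁅x, ⁅y, a⁆⁆ = -⁅⁅x, a⁆, y⁆ + ⁅⁅x, y⁆, a⁆ := by
  rw [leibniz_lie, ← lie_skew (⁅x, a⁆) y]
  abel

theorem exists_lie_iterate_eq_neg_one_pow_smul_add (a b : L) (k : ℕ) :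
    ∀ (m : ℕ) (r : L), ∃ t : L,
      ⁅(fun x : L => ⁅x, a⁆)^[m] r, (fun x : L => ⁅x, a⁆)^[k] b⁆ =
        ((-1 : ℤ) ^ k) • ⁅(fun x : L => ⁅x, a⁆)^[m + k] r, b⁆ + ⁅t, a⁆ := by
  set f : L → L := fun x => ⁅x, a⁆
  induction k with
  | zero => exact fun m r => ⟨0, by simp⟩
  | succ k ih =>
    intro m r
    obtain ⟨t, ht⟩ := ih (m + 1) r
    refine ⟨-t + ⁅f^[m] r, f^[k] b⁆, ?_⟩
    have hb : f^[k + 1] b = ⁅f^[k] b, a⁆ := Function.iterate_succ_apply' f k b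
    have hr : ⁅f^[m] r, a⁆ = f^[m + 1] r := (Function.iterate_succ_apply' f m r).symm
    rw [hb, lie_lie_right_eq_neg_lie_lie_add_lie, hr, ht, Nat.add_right_comm m 1 k, ← Nat.add_assoc,
      pow_succ, mul_neg_one, neg_smul, add_lie, neg_lie]
    abel

end

theorem odd_ad_rewrite_general {L : Type*} [LieRing L]
    (a b : L) (r : L) (m n : ℕ) :
    ∃ t : L,
      ⁅(fun x : L => ⁅x, a⁆)^[m] r, (fun x : L => ⁅x, a⁆)^[2 * n + 1] b⁆ =
        -⁅(fun x : L => ⁅x, a⁆)^[m + 2 * n + 1] r, b⁆ + ⁅t, a⁆ := by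
  obtain ⟨t, ht⟩ := exists_lie_iterate_eq_neg_one_pow_smul_add a b (2 * n + 1) m r
  rw [(odd_two_mul_add_one n).neg_one_pow, neg_one_smul, ← add_assoc] at ht
  exact ⟨t, ht⟩

theorem odd_ad_rewrite {K L : Type*} [CommRing K] [LieRing L] [LieAlgebra K L]
    (a b : L) (r : L) (m n : ℕ) :
    ∃ t : L,
      ⁅(fun x : L => ⁅x, a⁆)^[m] r, (fun x : L => ⁅x, a⁆)^[2 * n + 1] b⁆ =
        -⁅(fun x : L => ⁅x, a⁆)^[m + 2 * n + 1] r, b⁆ + ⁅t, a⁆ :=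
  odd_ad_rewrite_general a b r m n
end

section
/- Let L be a Lie algebra over a commutative ring K and let a, b ∈ L. For every natural number n there exists u ∈ L such that ⁅(ad a)^{2n} b, b⁆ + ⁅u, a⁆ = 0; that is, ⁅(ad a)^{2n} b, b⁆ lies in the image of the map x ↦ ⁅x, a⁆. -/
/-!
Right multiplication `f = ⁅·, a⁆` is a derivation, so `⁅f x, y⁆ ≡ -⁅x, f y⁆` modulo `⁅L, a⁆`.
Moving `n` factors of `f` from the left to the right slot gives
`⁅f^[2n] b, b⁆ ≡ (-1)^n ⁅f^[n] b, f^[n] b⁆ = 0`.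
-/

namespace LieRing

variable {L : Type*} [LieRing L] (a : L)

def lieRight : L →+ L :=
  AddMonoidHom.mk' (⁅·, a⁆) fun x y => add_lie x y a

@[simp]
theorem lieRight_apply (x : L) : lieRight a x = ⁅x, a⁆ := rfl

theorem lie_lieRight_add_lie_lieRight (x y : L) :
    ⁅lieRight a x, y⁆ + ⁅x, lieRight a y⁆ = lieRight a ⁅x, y⁆ := by
  simp only [lieRight_apply]
  rw [lie_lie, ← lie_skew a ⁅x, y⁆, ← lie_skew a y, lie_neg]
  abel

theorem mk_lie_lieRight (x y : L) :
    (↑⁅lieRight a x, y⁆ : L ⧸ (lieRight a).range) = -↑⁅x, lieRight a y⁆ := by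
  rw [eq_neg_iff_add_eq_zero, ← QuotientAddGroup.mk_add, QuotientAddGroup.eq_zero_iff,
    lie_lieRight_add_lie_lieRight]
  exact ⟨_, rfl⟩

theorem mk_lie_iterate_lieRight (x y : L) (i j : ℕ) :
    (↑⁅(lieRight a)^[i + j] x, y⁆ : L ⧸ (lieRight a).range) =
      (-1 : ℤ) ^ j • ↑⁅(lieRight a)^[i] x, (lieRight a)^[j] y⁆ := by
  induction j generalizing i with
  | zero => simp
  | succ j ih =>
    rw [← add_assoc, add_right_comm, ih, Function.iterate_succ_apply', mk_lie_lieRight,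
      ← Function.iterate_succ_apply' (lieRight a) j y, pow_succ, mul_neg_one, neg_smul, smul_neg]

theorem lie_iterate_lieRight_two_mul_mem_range (b : L) (n : ℕ) :
    ⁅(lieRight a)^[2 * n] b, b⁆ ∈ (lieRight a).range := by
  rw [← QuotientAddGroup.eq_zero_iff, two_mul, mk_lie_iterate_lieRight, lie_self,
    QuotientAddGroup.mk_zero, smul_zero]

end LieRing

theorem even_ad_self_bracket_general {L : Type*} [LieRing L]
    (a b : L) (n : ℕ) :
    ∃ u : L, ⁅(fun x : L => ⁅x, a⁆)^[2 * n] b, b⁆ + ⁅u, a⁆ = 0 := by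
  obtain ⟨u, hu⟩ := LieRing.lie_iterate_lieRight_two_mul_mem_range a b n
  refine ⟨-u, ?_⟩
  change ⁅(LieRing.lieRight a)^[2 * n] b, b⁆ + ⁅-u, a⁆ = 0
  rw [neg_lie, ← hu, LieRing.lieRight_apply, add_neg_cancel]

theorem even_ad_self_bracket {K L : Type*} [CommRing K] [LieRing L] [LieAlgebra K L]
    (a b : L) (n : ℕ) :
    ∃ u : L, ⁅(fun x : L => ⁅x, a⁆)^[2 * n] b, b⁆ + ⁅u, a⁆ = 0 :=
  even_ad_self_bracket_general a b n
end

section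
/- Let L be a Lie algebra over a commutative ring K, a, b, c ∈ L, and f a polynomial over K. Define x = evaluation of f at (ad a)^2 applied to b, and y = evaluation of f at (ad a)^2 applied to c. Then there exist z, z₁, z₂ ∈ L such that ⁅x, c⁆ + ⁅y, b⁆ = ⁅z, a⁆, ⁅x, b⁆ = ⁅z₁, a⁆, and ⁅y, c⁆ = ⁅z₂, a⁆. -/
/-! The map `D = (w ↦ ⁅w, a⁆)` is a derivation, so by the Leibniz rule
`⁅D^n u, v⁆ ≡ (-1)^n ⁅u, D^n v⁆` modulo `range D = ⁅L, a⁆`. For even `n = 2i` this makes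
`⁅D^{2i} u, v⁆ + ⁅D^{2i} v, u⁆` vanish modulo `⁅L, a⁆`, and `⁅D^{2i} u, u⁆ ≡ ⁅D^i u, D^i u⁆ = 0`;
summing over the coefficients of `f` gives the three equations. -/

open Polynomial

namespace LieDerivation

variable {K L : Type*} [CommRing K] [LieRing L] [LieAlgebra K L] (D : LieDerivation K L L)

lemma lie_add_lie_mem_range (u v : L) :
    ⁅D u, v⁆ + ⁅u, D v⁆ ∈ LinearMap.range (D : L →ₗ[K] L) :=
  ⟨⁅u, v⁆, by rw [coeFn_coe, apply_lie_eq_add, add_comm]⟩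

lemma lie_iterate_sub_mem_range (n : ℕ) (u v : L) :
    ⁅D^[n] u, v⁆ - (-1 : ℤ) ^ n • ⁅u, D^[n] v⁆ ∈ LinearMap.range (D : L →ₗ[K] L) := by
  induction n generalizing u with
  | zero => simp
  | succ n ih =>
    have hsplit : ⁅D^[n + 1] u, v⁆ - (-1 : ℤ) ^ (n + 1) • ⁅u, D^[n + 1] v⁆ =
        (⁅D^[n] (D u), v⁆ - (-1 : ℤ) ^ n • ⁅D u, D^[n] v⁆) +
          (-1 : ℤ) ^ n • (⁅D u, D^[n] v⁆ + ⁅u, D (D^[n] v)⁆) := by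
      rw [Function.iterate_succ_apply, Function.iterate_succ_apply', pow_succ]
      module
    rw [hsplit]
    exact add_mem (ih (D u)) (zsmul_mem (D.lie_add_lie_mem_range u _) _)

lemma lie_iterate_two_mul_add_mem_range (i : ℕ) (u v : L) :
    ⁅D^[2 * i] u, v⁆ + ⁅D^[2 * i] v, u⁆ ∈ LinearMap.range (D : L →ₗ[K] L) := by
  have h := D.lie_iterate_sub_mem_range (2 * i) u v
  rwa [pow_mul, neg_one_sq, one_pow, one_smul, ← lie_skew u (D^[2 * i] v), sub_neg_eq_add] at h

lemma lie_iterate_two_mul_self_mem_range (i : ℕ) (u : L) :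
    ⁅D^[2 * i] u, u⁆ ∈ LinearMap.range (D : L →ₗ[K] L) := by
  have h := D.lie_iterate_sub_mem_range i (D^[i] u) u
  rwa [← Function.iterate_add_apply, lie_self, smul_zero, sub_zero, ← two_mul] at h

lemma sum_lie_add_sum_lie_mem_range (f : K[X]) (u v : L) :
    ⁅f.sum fun i α => α • D^[2 * i] u, v⁆ + ⁅f.sum fun i α => α • D^[2 * i] v, u⁆ ∈
      LinearMap.range (D : L →ₗ[K] L) := by
  simp only [Polynomial.sum, sum_lie, smul_lie, ← Finset.sum_add_distrib, ← smul_add]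
  exact Submodule.sum_mem _ fun i _ =>
    Submodule.smul_mem _ _ (D.lie_iterate_two_mul_add_mem_range i u v)

lemma sum_lie_self_mem_range (f : K[X]) (u : L) :
    ⁅f.sum fun i α => α • D^[2 * i] u, u⁆ ∈ LinearMap.range (D : L →ₗ[K] L) := by
  simp only [Polynomial.sum, sum_lie, smul_lie]
  exact Submodule.sum_mem _ fun i _ =>
    Submodule.smul_mem _ _ (D.lie_iterate_two_mul_self_mem_range i u)

end LieDerivation

theorem poly_pair_satisfies_system {K L : Type*} [CommRing K] [LieRing L] [LieAlgebra K L]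
    (a b c : L) (f : Polynomial K) :
    let x := f.sum fun i α => α • (fun w : L => ⁅w, a⁆)^[2 * i] b
    let y := f.sum fun i α => α • (fun w : L => ⁅w, a⁆)^[2 * i] c
    ∃ z z₁ z₂ : L, ⁅x, c⁆ + ⁅y, b⁆ = ⁅z, a⁆ ∧ ⁅x, b⁆ = ⁅z₁, a⁆ ∧ ⁅y, c⁆ = ⁅z₂, a⁆ := by
  intro x y
  -- `LieDerivation.inner K L L a` is the derivation `w ↦ ⁅w, a⁆`, whose range is `⁅L, a⁆`.
  let D := LieDerivation.inner K L L a
  obtain ⟨z, hz⟩ := D.sum_lie_add_sum_lie_mem_range f b c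
  obtain ⟨z₁, hz₁⟩ := D.sum_lie_self_mem_range f b
  obtain ⟨z₂, hz₂⟩ := D.sum_lie_self_mem_range f c
  exact ⟨z, z₁, z₂, hz.symm, hz₁.symm, hz₂.symm⟩
end

section
/- Let L be the free Lie algebra over a field K on a set X with at least two distinct generators a and b. If f is a polynomial over K such that Σᵢ (coeff f i) • (ad ι(a))^i (ι(b)) = 0 in L, then f = 0. -/
/-!
Represent `L` on `K[X]`, sending `a` to multiplication by `-X` and `b` to the projection
`P : p ↦ p(0)`. Since `P` kills multiples of `X`, the element `⁅b, a^{(i)}⁆` acts as `X^i · P`,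
which maps `1` to `X^i`. Applying the image of the given relation to `1` therefore yields `f = 0`.
-/

attribute [local instance 100] LieRing.ofAssociativeRing

theorem iterate_lie_neg_eq_pow_mul_of_mul_eq_zero {A : Type*} [Ring A] {m p : A}
    (h : p * m = 0) (i : ℕ) : (fun w => ⁅w, -m⁆)^[i] p = m ^ i * p := by
  induction i with
  | zero => simp
  | succ i ih =>
    rw [Function.iterate_succ_apply', ih, Ring.lie_def, mul_assoc, mul_neg, h, pow_succ']
    noncomm_ring

theorem LieHom.map_iterate_lie {R L L' : Type*} [CommRing R] [LieRing L] [LieAlgebra R L]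
    [LieRing L'] [LieAlgebra R L'] (φ : L →ₗ⁅R⁆ L') (u v : L) (i : ℕ) :
    φ ((fun w => ⁅w, u⁆)^[i] v) = (fun w => ⁅w, φ u⁆)^[i] (φ v) :=
  Function.Semiconj.iterate_right (fun x => φ.map_lie x u) i v

namespace Polynomial

variable (R : Type*) [CommRing R]

noncomputable def constantCoeffEnd : Module.End R R[X] := Algebra.linearMap R R[X] ∘ₗ lcoeff R 0

noncomputable def mulXEnd : Module.End R R[X] := LinearMap.mulLeft R X

theorem constantCoeffEnd_mul_mulXEnd : constantCoeffEnd R * mulXEnd R = 0 :=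
  LinearMap.ext fun p => by simp [constantCoeffEnd, mulXEnd]

theorem mulXEnd_pow_mul_constantCoeffEnd_apply_one (i : ℕ) :
    (mulXEnd R ^ i * constantCoeffEnd R) 1 = X ^ i := by
  simp [constantCoeffEnd, mulXEnd]

end Polynomial

theorem free_lie_faithful_poly {K : Type*} [Field K] {X : Type*} (a b : X) (hab : a ≠ b)
    (f : Polynomial K)
    (h : (f.sum fun i α =>
        α • (fun w : FreeLieAlgebra K X => ⁅w, FreeLieAlgebra.of K a⁆)^[i]
          (FreeLieAlgebra.of K b)) = 0) :
    f = 0 := by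
  classical
  let ρ := FreeLieAlgebra.lift K
    (Function.update (fun _ => Polynomial.constantCoeffEnd K) a (-Polynomial.mulXEnd K))
  have hρa : ρ (FreeLieAlgebra.of K a) = -Polynomial.mulXEnd K := by simp [ρ]
  have hρb : ρ (FreeLieAlgebra.of K b) = Polynomial.constantCoeffEnd K := by simp [ρ, hab.symm]
  have hρ := congrArg (fun x => ρ x 1) h
  simp only [Polynomial.sum_def, map_sum, map_smul, LieHom.map_iterate_lie, hρa, hρb,
    iterate_lie_neg_eq_pow_mul_of_mul_eq_zero (Polynomial.constantCoeffEnd_mul_mulXEnd K),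
    LinearMap.sum_apply, LinearMap.smul_apply,
    Polynomial.mulXEnd_pow_mul_constantCoeffEnd_apply_one, Polynomial.smul_eq_C_mul,
    ← Polynomial.as_sum_support_C_mul_X_pow] at hρ
  simpa using hρ
end

section
/- Let L be a Lie algebra over a commutative ring K, a, b, c ∈ L, and f, g polynomials over K with product h = f·g. Then there exists s ∈ L such that ⁅f((ad a)²)(b), g((ad a)²)(c)⁆ = ⁅h((ad a)²)(b), c⁆ + ⁅s, a⁆. -/
/-!
Write `D` for the derivation `w ↦ ⁅w, a⁆`. The Leibniz rule gives
`⁅x, D² y⁆ - ⁅D² x, y⁆ = D (⁅x, D y⁆ - ⁅D x, y⁆)`, so `D²`, and with it every polynomial in `D²`,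
is self-adjoint for the bracket modulo the range of `D`. Moving `g(D²)` from `c` across the bracket
onto `f(D²) b` then turns `⁅f(D²) b, g(D²) c⁆` into `⁅(g f)(D²) b, c⁆ = ⁅h(D²) b, c⁆` modulo `⁅L, a⁆`.
-/

open Polynomial

namespace LieDerivation

variable {R L : Type*} [CommRing R] [LieRing L] [LieAlgebra R L] (D : LieDerivation R L L)

theorem lie_sq_apply_sub_sq_apply_lie (x y : L) :
    ⁅x, (D.toLinearMap ^ 2) y⁆ - ⁅(D.toLinearMap ^ 2) x, y⁆ = D (⁅x, D y⁆ - ⁅D x, y⁆) := by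
  simp only [pow_two, Module.End.mul_apply, coeFn_coe, map_sub, apply_lie_eq_add]
  abel

theorem lie_pow_sq_apply_sub_mem_range (n : ℕ) (x y : L) :
    ⁅x, ((D.toLinearMap ^ 2) ^ n) y⁆ - ⁅((D.toLinearMap ^ 2) ^ n) x, y⁆ ∈
      LinearMap.range D.toLinearMap := by
  induction n generalizing y with
  | zero => simp
  | succ n ih =>
    set T := D.toLinearMap ^ 2
    have hy : (T ^ (n + 1)) y = (T ^ n) (T y) := by rw [pow_succ, Module.End.mul_apply]
    have hx : (T ^ (n + 1)) x = T ((T ^ n) x) := by rw [pow_succ', Module.End.mul_apply]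
    rw [hy, hx, ← sub_add_sub_cancel _ ⁅(T ^ n) x, T y⁆, lie_sq_apply_sub_sq_apply_lie]
    exact add_mem (ih (T y)) (LinearMap.mem_range_self _ _)

theorem lie_aeval_sq_apply_sub_mem_range (p : R[X]) (x y : L) :
    ⁅x, aeval (D.toLinearMap ^ 2) p y⁆ - ⁅aeval (D.toLinearMap ^ 2) p x, y⁆ ∈
      LinearMap.range D.toLinearMap := by
  induction p using Polynomial.induction_on' with
  | add p q hp hq =>
    simpa only [map_add, LinearMap.add_apply, lie_add, add_lie, add_sub_add_comm] using
      add_mem hp hq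
  | monomial n r =>
    simpa only [aeval_monomial, Module.End.mul_apply, Module.algebraMap_end_apply, lie_smul,
      smul_lie, ← smul_sub] using Submodule.smul_mem _ r (D.lie_pow_sq_apply_sub_mem_range n x y)

end LieDerivation

theorem poly_multiplication_encoding {K L : Type*} [CommRing K] [LieRing L] [LieAlgebra K L]
    (a b c : L) (f g h : Polynomial K) (hfg : h = f * g) :
    ∃ s : L,
      ⁅f.sum fun i α => α • (fun w : L => ⁅w, a⁆)^[2 * i] b,
        g.sum fun i α => α • (fun w : L => ⁅w, a⁆)^[2 * i] c⁆ =
      ⁅h.sum fun i α => α • (fun w : L => ⁅w, a⁆)^[2 * i] b, c⁆ + ⁅s, a⁆ := by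
  set D := LieDerivation.inner K L L a
  have hsum : ∀ (p : K[X]) (x : L),
      (p.sum fun i α => α • (fun w : L => ⁅w, a⁆)^[2 * i] x) = aeval (D.toLinearMap ^ 2) p x := by
    intro p x
    rw [aeval_endomorphism]
    simp only [← pow_mul, Module.End.pow_apply]
    rfl
  obtain ⟨s, hs⟩ := D.lie_aeval_sq_apply_sub_mem_range g (aeval (D.toLinearMap ^ 2) f b) c
  refine ⟨s, ?_⟩
  rw [hsum, hsum, hsum, hfg, mul_comm f g, map_mul, Module.End.mul_apply]
  exact sub_eq_iff_eq_add'.mp hs.symm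
end

section
/- Let K be a field and L the free Lie algebra on distinct generators a₁, a₂ over K. For α, β, γ ∈ K, the equation ⁅α • ι(a₁), β • ι(a₂)⁆ = ⁅γ • ι(a₁), ι(a₂)⁆ holds in L if and only if α·β = γ in K. -/
theorem smul_lie_smul_eq_smul_lie_iff {R L : Type*} [CommRing R] [IsDomain R] [LieRing L]
    [LieAlgebra R L] [Module.IsTorsionFree R L] {x y : L} (h : ⁅x, y⁆ ≠ 0) (α β γ : R) :
    ⁅α • x, β • y⁆ = ⁅γ • x, y⁆ ↔ α * β = γ := by
  rw [smul_lie, lie_smul, smul_smul, smul_lie, smul_left_inj h]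

namespace FreeLieAlgebra

theorem lie_of_ne_zero_of_lie_ne_zero {R X L : Type*} [CommRing R] [LieRing L] [LieAlgebra R L]
    (f : X → L) {a₁ a₂ : X} (hf : ⁅f a₁, f a₂⁆ ≠ 0) : ⁅of R a₁, of R a₂⁆ ≠ 0 := by
  intro h
  apply hf
  simpa only [lift_of_apply, LieHom.map_lie, map_zero] using congrArg (lift R f) h

theorem lie_of_ne_zero {R X : Type*} [CommRing R] [Nontrivial R] {a₁ a₂ : X} (ha : a₁ ≠ a₂) :
    ⁅of R a₁, of R a₂⁆ ≠ 0 := by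
  classical
  -- In gl₂, ⁅E₀₁, E₁₀⁆ = E₀₀ - E₁₁ ≠ 0.
  let _ : LieRing (Matrix (Fin 2) (Fin 2) R) := LieRing.ofAssociativeRing
  let f : X → Matrix (Fin 2) (Fin 2) R := fun x =>
    if x = a₁ then Matrix.single 0 1 1 else Matrix.single 1 0 1
  refine lie_of_ne_zero_of_lie_ne_zero f fun h => ?_
  have h₀₀ := congrFun (congrFun h 0) 0
  simp [f, ha.symm, Ring.lie_def, Matrix.single_mul_single_same] at h₀₀

end FreeLieAlgebra

theorem scalar_multiplication_encoding {K : Type*} [Field K] {X : Type*} (a₁ a₂ : X)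
    (ha : a₁ ≠ a₂) (α β γ : K) :
    ⁅α • FreeLieAlgebra.of K a₁, β • FreeLieAlgebra.of K a₂⁆ =
        ⁅γ • FreeLieAlgebra.of K a₁, FreeLieAlgebra.of K a₂⁆ ↔ α * β = γ :=
  smul_lie_smul_eq_smul_lie_iff (FreeLieAlgebra.lie_of_ne_zero ha) α β γ
end
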